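/- arXiv:1912.08675 — 2 statements merged into one kernel-verified Lean document; each statement's English description precedes it below -/
import Mathlib

section
/- Let ι: Γ₁ → Γ₂ be a specialization of graphs contracting an edge set 𝓔 ⊆ E(Γ₁), and let (𝓔₁, D₁) be a pseudo-divisor on Γ₁ with pushforward (𝓔₂, D₂) = ι_*(𝓔₁, D₁). Then the cone σ_{(Γ₂,𝓔₂,D₂)} = 𝕋_{𝓔₂}(ℝ^{E(Γ₂^{𝓔₂})}_{≥0}) is a face of the cone σ_{(Γ₁,𝓔₁,D₁)} = 𝕋_{𝓔₁}(ℝ^{E(Γ₁^{𝓔₁})}_{≥0}); specifically it is the intersection of σ_{(Γ₁,𝓔₁,D₁)} with the image of the supporting hyperplane H = {∑ x_{e'} = 0 : e' over some e ∈ 𝓔}, and 𝓛_{𝓔₁} ⊆ H. -/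
open scoped Classical

/-- A finite multigraph: finite vertex and edge types, with source and target maps
(an orientation is fixed on each edge). -/
structure Multigraph where
  V : Type
  E : Type
  [fintypeV : Fintype V]
  [fintypeE : Fintype E]
  [decEqV : DecidableEq V]
  [decEqE : DecidableEq E]
  s : E → V
  t : E → V

attribute [instance] Multigraph.fintypeV Multigraph.fintypeE
attribute [instance] Multigraph.decEqV Multigraph.decEqE

namespace Multigraph

variable (G : Multigraph)

/-- Adjacency using only edges in `F`. -/
def adjOn (F : Finset G.E) (u v : G.V) : Prop :=
  ∃ e ∈ F, (G.s e = u ∧ G.t e = v) ∨ (G.s e = v ∧ G.t e = u)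

/-- Adjacency in `G`. -/
def adj : G.V → G.V → Prop := G.adjOn Finset.univ

/-- `G` is connected. -/
def Connected : Prop := ∀ u v : G.V, Relation.EqvGen G.adj u v

/-- Number of connected components of the spanning subgraph with edge set `F`. -/
noncomputable def b0 (F : Finset G.E) : ℕ :=
  Nat.card (Quotient (Relation.EqvGen.setoid (G.adjOn F)))

/-- `E(A∖B, B∖A)`: the set of edges connecting `A∖B` to `B∖A`. -/
def crossEdges (A B : Finset G.V) : Finset G.E :=
  Finset.univ.filter fun e =>
    (G.s e ∈ A \ B ∧ G.t e ∈ B \ A) ∨ (G.s e ∈ B \ A ∧ G.t e ∈ A \ B)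

/-- The valence of `v` in the edge set `F` (loops count twice). -/
def valE (F : Finset G.E) (v : G.V) : ℕ :=
  (F.filter fun e => G.s e = v).card + (F.filter fun e => G.t e = v).card

/-- `β_D(S) = deg(D|_S) − μ(S) + δ_{Γ,S}/2`. -/
noncomputable def beta (μ : G.V → ℝ) (D : G.V → ℤ) (S : Finset G.V) : ℝ :=
  (∑ v ∈ S, (D v : ℝ)) - (∑ v ∈ S, μ v) + (G.crossEdges S Sᶜ).card / 2

end Multigraph

/-- A pseudo-divisor `(𝓔, D)` on `G`: a subset `𝓔` of edges and the divisor on the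
subdivision `Γ^𝓔` which takes the value `−1` at each exceptional vertex; it is recorded
by its values `D` on the original vertices. -/
structure PseudoDiv (G : Multigraph) where
  E : Finset G.E
  D : G.V → ℤ

namespace Multigraph

variable (G : Multigraph)

/-- The degree of a pseudo-divisor: `∑ D(v) − |𝓔|` (the exceptional vertices contribute `−1`). -/
def degP (P : PseudoDiv G) : ℤ := (∑ v, P.D v) - P.E.card

/-- `β_{𝓔,D}(S) = deg(D|_S) − μ_𝓔(S) + δ_{Γ_𝓔,S}/2`, where `μ_𝓔(v) = μ(v) + val_𝓔(v)/2`. -/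
noncomputable def betaP (μ : G.V → ℝ) (P : PseudoDiv G) (S : Finset G.V) : ℝ :=
  (∑ v ∈ S, (P.D v : ℝ)) - (∑ v ∈ S, (μ v + (G.valE P.E v : ℝ) / 2))
    + ((G.crossEdges S Sᶜ).filter fun e => e ∉ P.E).card / 2

/-- `(𝓔,D)` is `μ`-semistable. -/
def Semistable (μ : G.V → ℝ) (P : PseudoDiv G) : Prop :=
  ∀ S : Finset G.V, 0 ≤ G.betaP μ P S

/-- `(𝓔,D)` is `μ`-polystable: `β ≥ 0` always, with strict inequality whenever
`E(S,Sᶜ) ⊄ 𝓔`. -/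
def Polystable (μ : G.V → ℝ) (P : PseudoDiv G) : Prop :=
  ∀ S : Finset G.V, 0 ≤ G.betaP μ P S ∧
    (¬ G.crossEdges S Sᶜ ⊆ P.E → 0 < G.betaP μ P S)

/-- `(v₀,μ)`-quasistability for a pseudo-divisor. -/
def Quasistable (v₀ : G.V) (μ : G.V → ℝ) (P : PseudoDiv G) : Prop :=
  ∀ S : Finset G.V, S ≠ Finset.univ →
    (0 ≤ G.betaP μ P S ∧ (v₀ ∈ S → 0 < G.betaP μ P S))

/-- A specialization `P ≥ Q` witnessed by the choice `a`, which assigns to each edge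
`e ∈ P.E ∖ Q.E` the endpoint onto which the exceptional vertex of `e` is contracted. -/
def SpecChoice (P Q : PseudoDiv G) (a : G.E → G.V) : Prop :=
  Q.E ⊆ P.E ∧ (∀ e, a e = G.s e ∨ a e = G.t e) ∧
    ∀ v, Q.D v = P.D v - ((P.E \ Q.E).filter fun e => a e = v).card

/-- The specialization relation on pseudo-divisors: `Spec P Q` means `P ≥ Q`. -/
def Spec (P Q : PseudoDiv G) : Prop := ∃ a, G.SpecChoice P Q a

/-- The rank `rk(𝓔,D) = |𝓔| − b₀(Γ_𝓔) + b₀(Γ)`. -/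
noncomputable def rk (P : PseudoDiv G) : ℤ :=
  (P.E.card : ℤ) - G.b0 P.Eᶜ + G.b0 Finset.univ

end Multigraph

/-- A specialization of graphs `ι : Γ₁ → Γ₂`, contracting the edges in `contr`.
It consists of a surjection on vertices and an identification of `E(Γ₂)` with
`E(Γ₁) ∖ contr`, compatible with endpoints; contracted edges have their endpoints
identified. -/
structure GraphSpec (G₁ G₂ : Multigraph) where
  contr : Finset G₁.E
  ιV : G₁.V → G₂.V
  ιE : G₂.E → G₁.E
  surjV : Function.Surjective ιV
  injE : Function.Injective ιE
  rangeE : ∀ e₁ : G₁.E, (∃ e₂, ιE e₂ = e₁) ↔ e₁ ∉ contr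
  comp_s : ∀ e₂, G₂.s e₂ = ιV (G₁.s (ιE e₂))
  comp_t : ∀ e₂, G₂.t e₂ = ιV (G₁.t (ιE e₂))
  contr_ident : ∀ e ∈ contr, ιV (G₁.s e) = ιV (G₁.t e)

namespace GraphSpec

variable {G₁ G₂ : Multigraph} (σ : GraphSpec G₁ G₂)

/-- The preimage `ι⁻¹(V)` of a subset of vertices. -/
def preV (V : Finset G₂.V) : Finset G₁.V :=
  Finset.univ.filter fun v => σ.ιV v ∈ V

/-- The pushforward polarization `ι_*(μ)`. -/
noncomputable def pushMu (μ : G₁.V → ℝ) : G₂.V → ℝ := fun v' =>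
  ∑ v ∈ Finset.univ.filter (fun v => σ.ιV v = v'), μ v

/-- The pushforward `ι_*(𝓔₁, D₁)` of a pseudo-divisor: `𝓔₂ = 𝓔₁ ∩ E(Γ₂)`, and the
exceptional `−1`'s sitting over contracted edges of `𝓔₁` are absorbed into the image
vertex. -/
noncomputable def pushPD (P : PseudoDiv G₁) : PseudoDiv G₂ where
  E := Finset.univ.filter fun e₂ => σ.ιE e₂ ∈ P.E
  D := fun v' =>
    (∑ v ∈ Finset.univ.filter (fun v => σ.ιV v = v'), P.D v)
      - ((σ.contr ∩ P.E).filter fun e => σ.ιV (G₁.s e) = v').card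

end GraphSpec

namespace Multigraph

variable (G : Multigraph)

/-- The edge set of the subdivision `Γ^𝓔`: one edge for each `e ∉ 𝓔`, and two edges
`e^s` (Boolean `true`, incident to the source) and `e^t` (Boolean `false`, incident to
the target) for each `e ∈ 𝓔`. -/
def EIdx (𝓔 : Finset G.E) : Type :=
  {e : G.E // e ∉ 𝓔} ⊕ ({e : G.E // e ∈ 𝓔} × Bool)

noncomputable instance (𝓔 : Finset G.E) : Fintype (G.EIdx 𝓔) := by
  unfold EIdx; infer_instance

/-- The map `(f_𝓔, g_𝓔) : ℝ^{E(Γ^𝓔)} → ℝ^{E(Γ)} × ℝ^𝓔`: `f_𝓔` sums the coordinates of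
the edges lying over each edge of `Γ`, and `g_𝓔` records the coordinate of `e^s`. -/
noncomputable def Fmap (𝓔 : Finset G.E) (x : G.EIdx 𝓔 → ℝ) :
    (G.E → ℝ) × ({e : G.E // e ∈ 𝓔} → ℝ) :=
  (fun e =>
    if h : e ∈ 𝓔 then x (Sum.inr (⟨e, h⟩, true)) + x (Sum.inr (⟨e, h⟩, false))
    else x (Sum.inl ⟨e, h⟩),
   fun e => x (Sum.inr (e, true)))

/-- The vector `w_V ∈ ℝ^{E(Γ^𝓔)}`: coefficient `+1` at half-edges over `E(V,V^c)`
incident to `V`, `−1` at those incident to `V^c`, and `0` elsewhere. -/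
noncomputable def wVec (𝓔 : Finset G.E) (S : Finset G.V) : G.EIdx 𝓔 → ℝ
  | Sum.inl _ => 0
  | Sum.inr (e, b) =>
      let v := if b then G.s e.1 else G.t e.1
      let w := if b then G.t e.1 else G.s e.1
      if v ∈ S ∧ w ∉ S then 1 else if w ∈ S ∧ v ∉ S then -1 else 0

/-- The subspace `𝓛_𝓔 ⊆ ℝ^{E(Γ^𝓔)}` spanned by the vectors `w_V` over all `V ⊆ V(Γ)`
with `E(V,V^c) ⊆ 𝓔`. -/
noncomputable def LLspace (𝓔 : Finset G.E) : Submodule ℝ (G.EIdx 𝓔 → ℝ) :=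
  Submodule.span ℝ
    {w | ∃ S : Finset G.V, G.crossEdges S Sᶜ ⊆ 𝓔 ∧ w = G.wVec 𝓔 S}

/-- The vector `u_V ∈ ℝ^𝓔`. -/
noncomputable def uVecR (𝓔 : Finset G.E) (S : Finset G.V) :
    {e : G.E // e ∈ 𝓔} → ℝ := fun e =>
  (if G.s e.1 ∈ S ∧ G.t e.1 ∉ S then (1 : ℝ) else 0)
    - (if G.t e.1 ∈ S ∧ G.s e.1 ∉ S then (1 : ℝ) else 0)

/-- The subspace `L_𝓔 ⊆ ℝ^𝓔` spanned by the vectors `u_V` over all `V ⊆ V(Γ)` with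
`E(V,V^c) ⊆ 𝓔`. -/
noncomputable def LspaceR (𝓔 : Finset G.E) : Submodule ℝ ({e : G.E // e ∈ 𝓔} → ℝ) :=
  Submodule.span ℝ
    {u | ∃ S : Finset G.V, G.crossEdges S Sᶜ ⊆ 𝓔 ∧ u = G.uVecR 𝓔 S}

end Multigraph

namespace Multigraph

/-- The edge of `Γ` lying under an edge of the subdivision `Γ^𝓔`. -/
def under (G : Multigraph) (𝓔 : Finset G.E) : G.EIdx 𝓔 → G.E
  | Sum.inl e => e.1
  | Sum.inr (e, _) => e.1

end Multigraph

namespace GraphSpec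

variable {G₁ G₂ : Multigraph} (σ : GraphSpec G₁ G₂)

/-- The pushforward edge set `𝓔₂ = 𝓔₁ ∩ E(Γ₂)`. -/
def pushE (𝓔₁ : Finset G₁.E) : Finset G₂.E :=
  Finset.univ.filter fun e => σ.ιE e ∈ 𝓔₁

/-- The inclusion `E(Γ₂^{𝓔₂}) → E(Γ₁^{𝓔₁})` induced by `ιE`. -/
def jIdx (𝓔₁ : Finset G₁.E) : G₂.EIdx (σ.pushE 𝓔₁) → G₁.EIdx 𝓔₁
  | Sum.inl e => Sum.inl ⟨σ.ιE e.1, fun hc =>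
      e.2 (Finset.mem_filter.mpr ⟨Finset.mem_univ _, hc⟩)⟩
  | Sum.inr (e, b) => Sum.inr (⟨σ.ιE e.1, (Finset.mem_filter.mp e.2).2⟩, b)

/-- Extension by zero `ℝ^{E(Γ₂^{𝓔₂})} → ℝ^{E(Γ₁^{𝓔₁})}` along `jIdx`. -/
noncomputable def jMap (𝓔₁ : Finset G₁.E) (x : G₂.EIdx (σ.pushE 𝓔₁) → ℝ) :
    G₁.EIdx 𝓔₁ → ℝ := fun i =>
  ∑ i₂ : G₂.EIdx (σ.pushE 𝓔₁), if σ.jIdx 𝓔₁ i₂ = i then x i₂ else 0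

end GraphSpec

/-- `F` is a face of the cone `C`: `F ⊆ C` and `F` is cut out of `C` by a supporting
linear functional. -/
def IsFaceOf {M : Type} [AddCommGroup M] [Module ℝ M] (F C : Set M) : Prop :=
  F ⊆ C ∧ ∃ φ : M →ₗ[ℝ] ℝ, (∀ x ∈ C, 0 ≤ φ x) ∧ F = {x ∈ C | φ x = 0}

/-! The functional summing the coordinates that lie over contracted edges is nonnegative on the
orthant and kills every generator `w_V` of `𝓛_{𝓔₁}`, since the two halves `e^s`, `e^t` of a
subdivided edge carry opposite signs in `w_V`. It therefore descends to the quotient and cuts a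
face out of `σ_{(Γ₁,𝓔₁,D₁)}`. A nonnegative vector is killed by it exactly when it vanishes over
the contracted edges, i.e. when it is the extension by zero of a nonnegative vector on
`E(Γ₂^{𝓔₂})`; so that face is `σ_{(Γ₂,𝓔₂,D₂)}`. -/

section FaceOfQuotient

variable {M : Type} [AddCommGroup M] [Module ℝ M] (L : Submodule ℝ M) {φ : M →ₗ[ℝ] ℝ}

theorem Submodule.mkQ_image_sep_eq_liftQ (hL : L ≤ LinearMap.ker φ) (K : Set M) :
    L.mkQ '' {x ∈ K | φ x = 0} = {y ∈ L.mkQ '' K | L.liftQ φ hL y = 0} := by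
  ext y
  constructor
  · rintro ⟨x, ⟨hx, hφx⟩, rfl⟩
    exact ⟨⟨x, hx, rfl⟩, hφx⟩
  · rintro ⟨⟨x, hx, rfl⟩, hφx⟩
    exact ⟨x, ⟨hx, hφx⟩, rfl⟩

theorem Submodule.mkQ_image_sep_eq_inter (hL : L ≤ LinearMap.ker φ) (K : Set M) :
    L.mkQ '' {x ∈ K | φ x = 0} = L.mkQ '' K ∩ L.mkQ '' {x | φ x = 0} := by
  rw [L.mkQ_image_sep_eq_liftQ hL]
  ext y
  constructor
  · rintro ⟨⟨x, hx, rfl⟩, hφx⟩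
    exact ⟨⟨x, hx, rfl⟩, x, hφx, rfl⟩
  · rintro ⟨hy, x, hφx, rfl⟩
    exact ⟨hy, hφx⟩

theorem Submodule.isFaceOf_mkQ_image (hL : L ≤ LinearMap.ker φ) {K : Set M}
    (hK : ∀ x ∈ K, 0 ≤ φ x) : IsFaceOf (L.mkQ '' {x ∈ K | φ x = 0}) (L.mkQ '' K) := by
  refine ⟨Set.image_mono (Set.sep_subset _ _), L.liftQ φ hL, ?_, L.mkQ_image_sep_eq_liftQ hL K⟩
  rintro _ ⟨x, hx, rfl⟩
  exact hK x hx

end FaceOfQuotient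

theorem Function.Injective.image_extend_zero_nonneg {α β R : Type} [Preorder R] [Zero R]
    {j : α → β} (hj : j.Injective) :
    (fun z : α → R => Function.extend j z 0) '' {z | ∀ a, 0 ≤ z a} =
      {x | (∀ b, 0 ≤ x b) ∧ ∀ b ∉ Set.range j, x b = 0} := by
  ext x
  constructor
  · rintro ⟨z, hz, rfl⟩
    refine ⟨fun b => ?_, fun b hb => Function.extend_apply' _ _ _ hb⟩
    by_cases hb : b ∈ Set.range j
    · obtain ⟨a, rfl⟩ := hb
      simp [hj.extend_apply, hz a]
    · simp [Function.extend_apply' _ _ _ hb]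
  · rintro ⟨hx, hx0⟩
    refine ⟨x ∘ j, fun a => hx (j a), funext fun b => ?_⟩
    by_cases hb : b ∈ Set.range j
    · obtain ⟨a, rfl⟩ := hb
      simp [hj.extend_apply]
    · simp [Function.extend_apply' _ _ _ hb, hx0 b hb]

namespace Multigraph

variable (G : Multigraph) (𝓔 : Finset G.E)

/-- For `C = σ.contr` this is the functional whose kernel is the hyperplane `H`. -/
noncomputable def sumOver (C : Finset G.E) : (G.EIdx 𝓔 → ℝ) →ₗ[ℝ] ℝ :=
  ∑ i with G.under 𝓔 i ∈ C, LinearMap.proj i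

variable {G 𝓔}

theorem sumOver_apply (C : Finset G.E) (x : G.EIdx 𝓔 → ℝ) :
    G.sumOver 𝓔 C x = ∑ i, if G.under 𝓔 i ∈ C then x i else 0 := by
  rw [sumOver, LinearMap.sum_apply, Finset.sum_filter]
  rfl

theorem sumOver_nonneg (C : Finset G.E) {x : G.EIdx 𝓔 → ℝ} (hx : ∀ i, 0 ≤ x i) :
    0 ≤ G.sumOver 𝓔 C x := by
  rw [sumOver_apply]
  exact Finset.sum_nonneg fun i _ => by split <;> [exact hx i; rfl]

theorem sumOver_eq_zero_iff_of_nonneg (C : Finset G.E) {x : G.EIdx 𝓔 → ℝ}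
    (hx : ∀ i, 0 ≤ x i) : G.sumOver 𝓔 C x = 0 ↔ ∀ i, G.under 𝓔 i ∈ C → x i = 0 := by
  simp [sumOver, LinearMap.sum_apply, Finset.sum_eq_zero_iff_of_nonneg, hx]

theorem wVec_true_add_false (S : Finset G.V) (e : {e : G.E // e ∈ 𝓔}) :
    G.wVec 𝓔 S (Sum.inr (e, true)) + G.wVec 𝓔 S (Sum.inr (e, false)) = 0 := by
  simp only [wVec]
  split_ifs <;> simp_all

theorem sumOver_wVec (C : Finset G.E) (S : Finset G.V) : G.sumOver 𝓔 C (G.wVec 𝓔 S) = 0 := by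
  rw [sumOver_apply]
  change ∑ i : {e : G.E // e ∉ 𝓔} ⊕ ({e : G.E // e ∈ 𝓔} × Bool), _ = 0
  have hinl : ∀ e, G.wVec 𝓔 S (Sum.inl e) = 0 := fun _ => rfl
  have hinr : ∀ e b, G.under 𝓔 (Sum.inr (e, b)) = e.1 := fun _ _ => rfl
  simp only [Fintype.sum_sum_type, Fintype.sum_prod_type, Fintype.sum_bool, hinl, hinr, ite_self,
    Finset.sum_const_zero, zero_add]
  refine Finset.sum_eq_zero fun e _ => ?_
  split_ifs
  · exact wVec_true_add_false S e
  · exact add_zero 0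

theorem LLspace_le_ker_sumOver (C : Finset G.E) : G.LLspace 𝓔 ≤ LinearMap.ker (G.sumOver 𝓔 C) := by
  rw [LLspace, Submodule.span_le]
  rintro _ ⟨S, -, rfl⟩
  exact sumOver_wVec C S

end Multigraph

namespace GraphSpec

variable {G₁ G₂ : Multigraph} (σ : GraphSpec G₁ G₂)

theorem mem_pushE {𝓔 : Finset G₁.E} {e : G₂.E} : e ∈ σ.pushE 𝓔 ↔ σ.ιE e ∈ 𝓔 := by
  simp [pushE]

variable (𝓔 : Finset G₁.E)

theorem under_jIdx (i : G₂.EIdx (σ.pushE 𝓔)) :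
    G₁.under 𝓔 (σ.jIdx 𝓔 i) = σ.ιE (G₂.under (σ.pushE 𝓔) i) := by
  rcases i with e | ⟨e, b⟩ <;> rfl

theorem jIdx_injective : (σ.jIdx 𝓔).Injective := by
  rintro (e | ⟨e, b⟩) (e' | ⟨e', b'⟩) h
  · exact congrArg Sum.inl (Subtype.ext (σ.injE (congrArg (G₁.under 𝓔) h)))
  · cases h
  · cases h
  · obtain ⟨he, rfl⟩ := Prod.ext_iff.mp (Sum.inr_injective h)
    rw [Subtype.ext (σ.injE (congrArg Subtype.val he))]

theorem range_jIdx : Set.range (σ.jIdx 𝓔) = {i | G₁.under 𝓔 i ∉ σ.contr} := by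
  ext i
  constructor
  · rintro ⟨i, rfl⟩
    exact (σ.rangeE _).mp ⟨_, (σ.under_jIdx 𝓔 i).symm⟩
  · intro hi
    obtain ⟨e₂, he₂⟩ := (σ.rangeE _).mpr hi
    rcases i with e | ⟨e, b⟩ <;> change σ.ιE e₂ = e.1 at he₂
    · refine ⟨Sum.inl ⟨e₂, fun hm => e.2 ?_⟩, congrArg Sum.inl (Subtype.ext he₂)⟩
      exact he₂ ▸ σ.mem_pushE.mp hm
    · refine ⟨Sum.inr (⟨e₂, σ.mem_pushE.mpr (he₂ ▸ e.2)⟩, b), ?_⟩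
      exact congrArg Sum.inr (Prod.ext (Subtype.ext he₂) rfl)

theorem jMap_eq_extend (z : G₂.EIdx (σ.pushE 𝓔) → ℝ) :
    σ.jMap 𝓔 z = Function.extend (σ.jIdx 𝓔) z 0 := by
  funext i
  by_cases hi : i ∈ Set.range (σ.jIdx 𝓔)
  · obtain ⟨i, rfl⟩ := hi
    simp [jMap, (σ.jIdx_injective 𝓔).eq_iff, (σ.jIdx_injective 𝓔).extend_apply]
  · rw [Function.extend_apply' _ _ _ hi]
    exact Finset.sum_eq_zero fun i₂ _ => if_neg fun h => hi ⟨i₂, h⟩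

theorem jMap_image_nonneg :
    σ.jMap 𝓔 '' {z | ∀ i, 0 ≤ z i} =
      {x | (∀ i, 0 ≤ x i) ∧ G₁.sumOver 𝓔 σ.contr x = 0} := by
  rw [funext (σ.jMap_eq_extend 𝓔), (σ.jIdx_injective 𝓔).image_extend_zero_nonneg, σ.range_jIdx]
  ext x
  simp only [Set.mem_ofPred_eq, not_not]
  exact and_congr_right fun hx => (Multigraph.sumOver_eq_zero_iff_of_nonneg _ hx).symm

end GraphSpec

/-- for a specialization `ι : Γ₁ → Γ₂` contracting `𝓔 = contr` and a
pseudo-divisor `(𝓔₁,D₁)` on `Γ₁` with pushforward `(𝓔₂,D₂)`, the cone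
`σ_{(Γ₂,𝓔₂,D₂)}` is a face of `σ_{(Γ₁,𝓔₁,D₁)}`: the hyperplane
`H = {∑_{e' over e ∈ 𝓔} x_{e'} = 0}` contains `𝓛_{𝓔₁}`, and `σ_{(Γ₂,𝓔₂,D₂)}` equals
the intersection of `σ_{(Γ₁,𝓔₁,D₁)}` with the image of `H`. -/
theorem sigma_face_of_spec (G₁ G₂ : Multigraph) (σ : GraphSpec G₁ G₂)
    (P : PseudoDiv G₁) :
    -- `𝓛_{𝓔₁} ⊆ H`
    ((G₁.LLspace P.E : Set (G₁.EIdx P.E → ℝ)) ⊆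
        {x | (∑ i, if G₁.under P.E i ∈ σ.contr then x i else 0) = 0}) ∧
    -- `σ₂` is the intersection of `σ₁` with the image of `H`
    ((G₁.LLspace P.E).mkQ '' (σ.jMap P.E '' {x | ∀ i, 0 ≤ x i}) =
      ((G₁.LLspace P.E).mkQ '' {x | ∀ i, 0 ≤ x i}) ∩
        ((G₁.LLspace P.E).mkQ ''
          {x | (∑ i, if G₁.under P.E i ∈ σ.contr then x i else 0) = 0})) ∧
    -- `σ₂` is a face of `σ₁`
    IsFaceOf ((G₁.LLspace P.E).mkQ '' (σ.jMap P.E '' {x | ∀ i, 0 ≤ x i}))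
      ((G₁.LLspace P.E).mkQ '' {x | ∀ i, 0 ≤ x i}) := by
  have hL := G₁.LLspace_le_ker_sumOver (𝓔 := P.E) σ.contr
  have hjMap := σ.jMap_image_nonneg P.E
  refine ⟨fun x hx => ?_, ?_, ?_⟩
  · simpa only [LinearMap.mem_ker, Multigraph.sumOver_apply, Set.mem_ofPred_eq] using hL hx
  · rw [hjMap]
    simpa only [Multigraph.sumOver_apply, Set.mem_ofPred_eq] using
      (G₁.LLspace P.E).mkQ_image_sep_eq_inter hL {x | ∀ i, 0 ≤ x i}
  · rw [hjMap]
    exact (G₁.LLspace P.E).isFaceOf_mkQ_image hL fun x hx => Multigraph.sumOver_nonneg _ hx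
end

section
/- Let X be a tropical curve with μ-model Γ, and let 𝓓 be a μ-polystable divisor on X of combinatorial type (𝓔, D). Let Z ⊆ X be a subcurve with V = Z ∩ V(Γ) nonempty and β_𝓓(Z) = 0. Then E(V, V^c) ⊆ 𝓔, and for every e ∈ E(V, V^c) with endpoint v_e ∈ V, the segment from v_e to p_{𝓓,e} is contained in Z, where p_{𝓓,e} is the unique interior point of e with 𝓓(p_{𝓓,e}) = −1. -/
open scoped Classical

/-- A tropical subcurve `Z` of the tropical curve with model `G` and lengths `ℓ`: a set
of vertices together with, on each edge, a finite disjoint collection of closed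
(possibly degenerate) subintervals, closed under passing to endpoints of edges. -/
structure Subcurve (G : Multigraph) (ℓ : G.E → ℝ) where
  verts : Finset G.V
  segs : G.E → Finset (ℝ × ℝ)
  valid : ∀ e, ∀ I ∈ segs e, 0 ≤ I.1 ∧ I.1 ≤ I.2 ∧ I.2 ≤ ℓ e
  disj : ∀ e, ∀ I ∈ segs e, ∀ J ∈ segs e, I ≠ J → I.2 < J.1 ∨ J.2 < I.1
  closed_s : ∀ e, ∀ I ∈ segs e, I.1 = 0 → G.s e ∈ verts
  closed_t : ∀ e, ∀ I ∈ segs e, I.2 = ℓ e → G.t e ∈ verts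

namespace Subcurve

variable {G : Multigraph} {ℓ : G.E → ℝ}

/-- The point of the edge `e` with coordinate `t` belongs to `Z`. -/
def covers (Z : Subcurve G ℓ) (e : G.E) (t : ℝ) : Prop :=
  ∃ I ∈ Z.segs e, I.1 ≤ t ∧ t ≤ I.2

/-- `δ_{X,Z}`: the number of outgoing directions at the boundary of `Z`, i.e. the
edge-ends at vertices of `Z` not covered by `Z` plus the segment endpoints lying in the
interior of edges. -/
noncomputable def delta (Z : Subcurve G ℓ) : ℕ :=
  (∑ v ∈ Z.verts,
      (((Finset.univ : Finset G.E).filter fun e =>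
          G.s e = v ∧ ¬ ∃ I ∈ Z.segs e, I.1 = 0).card +
        ((Finset.univ : Finset G.E).filter fun e =>
          G.t e = v ∧ ¬ ∃ I ∈ Z.segs e, I.2 = ℓ e).card)) +
    ∑ e, ∑ I ∈ Z.segs e,
      ((if 0 < I.1 then 1 else 0) + (if I.2 < ℓ e then 1 else 0))

/-- `deg(𝓓|_Z)` for the unitary divisor `𝓓` of combinatorial type `(𝓔,D)` with points
`p_{𝓓,e}` of value `−1` on the edges of `𝓔`. -/
noncomputable def degRes (Z : Subcurve G ℓ) (𝓔 : Finset G.E) (D : G.V → ℤ)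
    (p : G.E → ℝ) : ℤ :=
  (∑ v ∈ Z.verts, D v) - (𝓔.filter fun e => Z.covers e (p e)).card

/-- `β_𝓓(Z) = deg(𝓓|_Z) − μ(Z) + δ_{X,Z}/2` for a unitary divisor of combinatorial type
`(𝓔,D)` (the polarization `μ` being supported on the vertices of the `μ`-model). -/
noncomputable def betaZ (Z : Subcurve G ℓ) (μ : G.V → ℝ) (𝓔 : Finset G.E)
    (D : G.V → ℤ) (p : G.E → ℝ) : ℝ :=
  (Z.degRes 𝓔 D p : ℝ) - (∑ v ∈ Z.verts, μ v) + (Z.delta : ℝ) / 2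

end Subcurve

/-- let `𝓓` be a `μ`-polystable divisor of combinatorial type `(𝓔,D)` on
the tropical curve `X` with `μ`-model `Γ`, and `Z ⊆ X` a subcurve with
`V = Z ∩ V(Γ) ≠ ∅` and `β_𝓓(Z) = 0`. Then `E(V,V^c) ⊆ 𝓔` and for every
`e ∈ E(V,V^c)` the segment from the endpoint `v_e ∈ V` to `p_{𝓓,e}` is contained in
`Z`. -/
theorem beta_zero_subcurve (G : Multigraph) (ℓ : G.E → ℝ) (hℓ : ∀ e, 0 < ℓ e)
    (hconn : G.Connected) (μ : G.V → ℝ)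
    (P : PseudoDiv G) (hP : G.Polystable μ P)
    (p : G.E → ℝ) (hp : ∀ e ∈ P.E, 0 < p e ∧ p e < ℓ e)
    (Z : Subcurve G ℓ) (hV : Z.verts ≠ ∅)
    (h0 : Z.betaZ μ P.E P.D p = 0) :
    G.crossEdges Z.verts Z.vertsᶜ ⊆ P.E ∧
      ∀ e ∈ G.crossEdges Z.verts Z.vertsᶜ,
        (G.s e ∈ Z.verts → ∀ t, 0 ≤ t → t ≤ p e → Z.covers e t) ∧
        (G.t e ∈ Z.verts → ∀ t, p e ≤ t → t ≤ ℓ e → Z.covers e t) := by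
  classical
  -- indicator functions
  set sv : G.E → ℝ := fun e => if G.s e ∈ Z.verts then 1 else 0 with hsvdef
  set tv : G.E → ℝ := fun e => if G.t e ∈ Z.verts then 1 else 0 with htvdef
  set zz : G.E → ℝ := fun e => if ∃ I ∈ Z.segs e, I.1 = 0 then 1 else 0 with hzzdef
  set ww : G.E → ℝ := fun e => if ∃ I ∈ Z.segs e, I.2 = ℓ e then 1 else 0 with hwwdef
  set nn : G.E → ℝ := fun e => ((Z.segs e).card : ℝ) with hnndef
  set cv : G.E → ℝ := fun e => if Z.covers e (p e) then 1 else 0 with hcvdef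
  set ev : G.E → ℝ := fun e => if e ∈ P.E then 1 else 0 with hevdef
  set xv : G.E → ℝ := fun e =>
    if e ∈ G.crossEdges Z.verts Z.vertsᶜ ∧ e ∉ P.E then 1 else 0 with hxvdef
  set g : G.E → ℝ := fun e =>
    sv e + tv e - 2 * zz e - 2 * ww e + 2 * nn e - 2 * (ev e * cv e)
      + ev e * (sv e + tv e) - xv e with hgdef
  -- elementary bounds
  have hsv0 : ∀ e, 0 ≤ sv e := by intro e; simp only [hsvdef]; split <;> norm_num
  have htv0 : ∀ e, 0 ≤ tv e := by intro e; simp only [htvdef]; split <;> norm_num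
  have hzz0 : ∀ e, 0 ≤ zz e := by intro e; simp only [hzzdef]; split <;> norm_num
  have hww0 : ∀ e, 0 ≤ ww e := by intro e; simp only [hwwdef]; split <;> norm_num
  have hzz1 : ∀ e, zz e ≤ 1 := by intro e; simp only [hzzdef]; split <;> norm_num
  have hww1 : ∀ e, ww e ≤ 1 := by intro e; simp only [hwwdef]; split <;> norm_num
  have hnn0 : ∀ e, 0 ≤ nn e := by intro e; simp only [hnndef]; positivity
  have hzsv : ∀ e, zz e ≤ sv e := by
    intro e
    by_cases hz : ∃ I ∈ Z.segs e, I.1 = 0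
    · obtain ⟨I, hI, h1⟩ := hz
      have hs : G.s e ∈ Z.verts := Z.closed_s e I hI h1
      simp only [hzzdef, hsvdef, if_pos (⟨I, hI, h1⟩ : ∃ I ∈ Z.segs e, I.1 = 0), if_pos hs]
      exact le_refl 1
    · simp only [hzzdef, if_neg hz]; exact hsv0 e
  have hwtv : ∀ e, ww e ≤ tv e := by
    intro e
    by_cases hw : ∃ I ∈ Z.segs e, I.2 = ℓ e
    · obtain ⟨I, hI, h1⟩ := hw
      have ht : G.t e ∈ Z.verts := Z.closed_t e I hI h1
      simp only [hwwdef, htvdef, if_pos (⟨I, hI, h1⟩ : ∃ I ∈ Z.segs e, I.2 = ℓ e), if_pos ht]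
      exact le_refl 1
    · simp only [hwwdef, if_neg hw]; exact htv0 e
  have hznn : ∀ e, zz e ≤ nn e := by
    intro e
    by_cases hz : ∃ I ∈ Z.segs e, I.1 = 0
    · obtain ⟨I, hI, h1⟩ := hz
      have h2 : 1 ≤ (Z.segs e).card := Finset.card_pos.2 ⟨I, hI⟩
      simp only [hzzdef, hnndef, if_pos (⟨I, hI, h1⟩ : ∃ I ∈ Z.segs e, I.1 = 0)]
      exact_mod_cast h2
    · simp only [hzzdef, if_neg hz]; exact hnn0 e
  have hwnn : ∀ e, ww e ≤ nn e := by
    intro e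
    by_cases hw : ∃ I ∈ Z.segs e, I.2 = ℓ e
    · obtain ⟨I, hI, h1⟩ := hw
      have h2 : 1 ≤ (Z.segs e).card := Finset.card_pos.2 ⟨I, hI⟩
      simp only [hwwdef, hnndef, if_pos (⟨I, hI, h1⟩ : ∃ I ∈ Z.segs e, I.2 = ℓ e)]
      exact_mod_cast h2
    · simp only [hwwdef, if_neg hw]; exact hnn0 e
  have hcovnn : ∀ e, Z.covers e (p e) → 1 ≤ nn e := by
    intro e hc
    obtain ⟨I, hI, _⟩ := hc
    have h2 : 1 ≤ (Z.segs e).card := Finset.card_pos.2 ⟨I, hI⟩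
    simp only [hnndef]; exact_mod_cast h2
  -- cardinalities of the sets of segments touching the ends of an edge
  have hzcard : ∀ e, (((Z.segs e).filter fun I => I.1 = 0).card : ℝ) = zz e := by
    intro e
    by_cases hz : ∃ I ∈ Z.segs e, I.1 = 0
    · obtain ⟨I, hI, h1⟩ := hz
      have hcle : ((Z.segs e).filter fun I => I.1 = 0).card ≤ 1 := by
        refine Finset.card_le_one.2 ?_
        intro J hJ K hK
        simp only [Finset.mem_filter] at hJ hK
        by_contra hne
        rcases Z.disj e J hJ.1 K hK.1 hne with h' | h'
        · linarith [(Z.valid e J hJ.1).1, (Z.valid e J hJ.1).2.1, hJ.2, hK.2]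
        · linarith [(Z.valid e K hK.1).1, (Z.valid e K hK.1).2.1, hJ.2, hK.2]
      have hpos : 0 < ((Z.segs e).filter fun I => I.1 = 0).card :=
        Finset.card_pos.2 ⟨I, Finset.mem_filter.2 ⟨hI, h1⟩⟩
      have hone : ((Z.segs e).filter fun I => I.1 = 0).card = 1 := le_antisymm hcle hpos
      simp only [hone, hzzdef, if_pos (⟨I, hI, h1⟩ : ∃ I ∈ Z.segs e, I.1 = 0), Nat.cast_one]
    · have hzero : ((Z.segs e).filter fun I => I.1 = 0).card = 0 := by
        rw [Finset.card_eq_zero, Finset.filter_eq_empty_iff]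
        intro I hI h1
        exact hz ⟨I, hI, h1⟩
      simp only [hzero, hzzdef, if_neg hz, Nat.cast_zero]
  have hwcard : ∀ e, (((Z.segs e).filter fun I => I.2 = ℓ e).card : ℝ) = ww e := by
    intro e
    by_cases hw : ∃ I ∈ Z.segs e, I.2 = ℓ e
    · obtain ⟨I, hI, h1⟩ := hw
      have hcle : ((Z.segs e).filter fun I => I.2 = ℓ e).card ≤ 1 := by
        refine Finset.card_le_one.2 ?_
        intro J hJ K hK
        simp only [Finset.mem_filter] at hJ hK
        by_contra hne
        rcases Z.disj e J hJ.1 K hK.1 hne with h' | h'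
        · linarith [(Z.valid e K hK.1).2.1, hJ.2, hK.2]
        · linarith [(Z.valid e J hJ.1).2.1, hJ.2, hK.2]
      have hpos : 0 < ((Z.segs e).filter fun I => I.2 = ℓ e).card :=
        Finset.card_pos.2 ⟨I, Finset.mem_filter.2 ⟨hI, h1⟩⟩
      have hone : ((Z.segs e).filter fun I => I.2 = ℓ e).card = 1 := le_antisymm hcle hpos
      simp only [hone, hwwdef, if_pos (⟨I, hI, h1⟩ : ∃ I ∈ Z.segs e, I.2 = ℓ e), Nat.cast_one]
    · have hzero : ((Z.segs e).filter fun I => I.2 = ℓ e).card = 0 := by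
        rw [Finset.card_eq_zero, Finset.filter_eq_empty_iff]
        intro I hI h1
        exact hw ⟨I, hI, h1⟩
      simp only [hzero, hwwdef, if_neg hw, Nat.cast_zero]
  -- sum identities
  have hH1 : (Z.delta : ℝ)
      = ∑ e, ((sv e - zz e) + (tv e - ww e) + (2 * nn e - zz e - ww e)) := by
    have hA : (∑ v ∈ Z.verts, (((Finset.univ : Finset G.E).filter fun e =>
          G.s e = v ∧ ¬ ∃ I ∈ Z.segs e, I.1 = 0).card : ℝ)) = ∑ e, (sv e - zz e) := by
      have h1 : ∀ v, (((Finset.univ : Finset G.E).filter fun e =>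
          G.s e = v ∧ ¬ ∃ I ∈ Z.segs e, I.1 = 0).card : ℝ)
          = ∑ e, if G.s e = v ∧ ¬ ∃ I ∈ Z.segs e, I.1 = 0 then (1:ℝ) else 0 := by
        intro v; rw [Finset.sum_boole]
      rw [Finset.sum_congr rfl fun v _ => h1 v, Finset.sum_comm]
      refine Finset.sum_congr rfl fun e _ => ?_
      by_cases hz : ∃ I ∈ Z.segs e, I.1 = 0
      · obtain ⟨I, hI, h1'⟩ := hz
        have hz' : ∃ I ∈ Z.segs e, I.1 = 0 := ⟨I, hI, h1'⟩
        have hs : G.s e ∈ Z.verts := Z.closed_s e I hI h1'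
        have hrw : ∀ v ∈ Z.verts,
            (if G.s e = v ∧ ¬ ∃ I ∈ Z.segs e, I.1 = 0 then (1:ℝ) else 0) = 0 :=
          fun v _ => if_neg (fun h => h.2 hz')
        rw [Finset.sum_congr rfl hrw, Finset.sum_const_zero]
        simp only [hsvdef, hzzdef, if_pos hz', if_pos hs]
        norm_num
      · have hrw : ∀ v ∈ Z.verts,
            (if G.s e = v ∧ ¬ ∃ I ∈ Z.segs e, I.1 = 0 then (1:ℝ) else 0)
              = if G.s e = v then (1:ℝ) else 0 := by
          intro v _
          by_cases hsv' : G.s e = v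
          · rw [if_pos ⟨hsv', hz⟩, if_pos hsv']
          · rw [if_neg (fun h => hsv' h.1), if_neg hsv']
        rw [Finset.sum_congr rfl hrw, Finset.sum_ite_eq]
        simp only [hsvdef, hzzdef, if_neg hz, sub_zero]
    have hB : (∑ v ∈ Z.verts, (((Finset.univ : Finset G.E).filter fun e =>
          G.t e = v ∧ ¬ ∃ I ∈ Z.segs e, I.2 = ℓ e).card : ℝ)) = ∑ e, (tv e - ww e) := by
      have h1 : ∀ v, (((Finset.univ : Finset G.E).filter fun e =>
          G.t e = v ∧ ¬ ∃ I ∈ Z.segs e, I.2 = ℓ e).card : ℝ)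
          = ∑ e, if G.t e = v ∧ ¬ ∃ I ∈ Z.segs e, I.2 = ℓ e then (1:ℝ) else 0 := by
        intro v; rw [Finset.sum_boole]
      rw [Finset.sum_congr rfl fun v _ => h1 v, Finset.sum_comm]
      refine Finset.sum_congr rfl fun e _ => ?_
      by_cases hw : ∃ I ∈ Z.segs e, I.2 = ℓ e
      · obtain ⟨I, hI, h1'⟩ := hw
        have hw' : ∃ I ∈ Z.segs e, I.2 = ℓ e := ⟨I, hI, h1'⟩
        have ht : G.t e ∈ Z.verts := Z.closed_t e I hI h1'
        have hrw : ∀ v ∈ Z.verts,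
            (if G.t e = v ∧ ¬ ∃ I ∈ Z.segs e, I.2 = ℓ e then (1:ℝ) else 0) = 0 :=
          fun v _ => if_neg (fun h => h.2 hw')
        rw [Finset.sum_congr rfl hrw, Finset.sum_const_zero]
        simp only [htvdef, hwwdef, if_pos hw', if_pos ht]
        norm_num
      · have hrw : ∀ v ∈ Z.verts,
            (if G.t e = v ∧ ¬ ∃ I ∈ Z.segs e, I.2 = ℓ e then (1:ℝ) else 0)
              = if G.t e = v then (1:ℝ) else 0 := by
          intro v _
          by_cases htv' : G.t e = v
          · rw [if_pos ⟨htv', hw⟩, if_pos htv']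
          · rw [if_neg (fun h => htv' h.1), if_neg htv']
        rw [Finset.sum_congr rfl hrw, Finset.sum_ite_eq]
        simp only [htvdef, hwwdef, if_neg hw, sub_zero]
    have hC : ∀ e, (∑ I ∈ Z.segs e,
          ((if 0 < I.1 then (1:ℝ) else 0) + if I.2 < ℓ e then (1:ℝ) else 0))
        = 2 * nn e - zz e - ww e := by
      intro e
      have hkey : ∀ I ∈ Z.segs e,
          ((if 0 < I.1 then (1:ℝ) else 0) + if I.2 < ℓ e then (1:ℝ) else 0)
          = (1 - (if I.1 = 0 then (1:ℝ) else 0)) + (1 - if I.2 = ℓ e then (1:ℝ) else 0) := by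
        intro I hI
        obtain ⟨hv1, hv2, hv3⟩ := Z.valid e I hI
        by_cases h1 : I.1 = 0 <;> by_cases h2 : I.2 = ℓ e
        · simp [h1, h2]
        · have h2' : I.2 < ℓ e := lt_of_le_of_ne hv3 h2
          simp [h1, h2, h2']
        · have h1' : 0 < I.1 := lt_of_le_of_ne hv1 (Ne.symm h1)
          simp [h1, h2, h1']
        · have h1' : 0 < I.1 := lt_of_le_of_ne hv1 (Ne.symm h1)
          have h2' : I.2 < ℓ e := lt_of_le_of_ne hv3 h2
          simp [h1, h2, h1', h2']
      rw [Finset.sum_congr rfl hkey, Finset.sum_add_distrib, Finset.sum_sub_distrib,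
        Finset.sum_sub_distrib, Finset.sum_const,
        Finset.sum_boole, Finset.sum_boole, hzcard, hwcard]
      simp only [nsmul_eq_mul, mul_one, hnndef]
      ring
    unfold Subcurve.delta
    push_cast
    rw [Finset.sum_add_distrib, hA, hB]
    rw [← Finset.sum_add_distrib, ← Finset.sum_add_distrib]
    refine Finset.sum_congr rfl fun e _ => ?_
    rw [hC e]
  have hH2 : (∑ v ∈ Z.verts, (G.valE P.E v : ℝ)) = ∑ e, ev e * (sv e + tv e) := by
    have h1 : ∀ v, (G.valE P.E v : ℝ)
        = (∑ e ∈ P.E, if G.s e = v then (1:ℝ) else 0)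
          + ∑ e ∈ P.E, if G.t e = v then (1:ℝ) else 0 := by
      intro v
      simp only [Multigraph.valE]
      push_cast
      rw [Finset.sum_boole, Finset.sum_boole]
    calc (∑ v ∈ Z.verts, (G.valE P.E v : ℝ))
        = ∑ v ∈ Z.verts, ((∑ e ∈ P.E, if G.s e = v then (1:ℝ) else 0)
            + ∑ e ∈ P.E, if G.t e = v then (1:ℝ) else 0) :=
          Finset.sum_congr rfl fun v _ => h1 v
      _ = (∑ v ∈ Z.verts, ∑ e ∈ P.E, if G.s e = v then (1:ℝ) else 0)
            + ∑ v ∈ Z.verts, ∑ e ∈ P.E, if G.t e = v then (1:ℝ) else 0 :=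
          Finset.sum_add_distrib
      _ = (∑ e ∈ P.E, ∑ v ∈ Z.verts, if G.s e = v then (1:ℝ) else 0)
            + ∑ e ∈ P.E, ∑ v ∈ Z.verts, if G.t e = v then (1:ℝ) else 0 := by
          rw [Finset.sum_comm, Finset.sum_comm (s := Z.verts)]
      _ = ∑ e ∈ P.E, (sv e + tv e) := by
          rw [← Finset.sum_add_distrib]
          refine Finset.sum_congr rfl fun e _ => ?_
          rw [Finset.sum_ite_eq, Finset.sum_ite_eq]
      _ = ∑ e, ev e * (sv e + tv e) := by
          rw [show (∑ e, ev e * (sv e + tv e))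
              = ∑ e, if e ∈ P.E then (sv e + tv e) else 0 from
            Finset.sum_congr rfl fun e _ => by simp only [hevdef]; split <;> simp,
            Finset.sum_ite_mem, Finset.univ_inter]
  have hH3 : ((P.E.filter fun e => Z.covers e (p e)).card : ℝ) = ∑ e, ev e * cv e := by
    rw [show (∑ e, ev e * cv e) = ∑ e, if e ∈ P.E then cv e else 0 from
        Finset.sum_congr rfl fun e _ => by simp only [hevdef]; split <;> simp,
      Finset.sum_ite_mem, Finset.univ_inter]
    simp only [hcvdef]
    rw [Finset.sum_boole]
  have hH4 : (((G.crossEdges Z.verts Z.vertsᶜ).filter fun e => e ∉ P.E).card : ℝ)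
      = ∑ e, xv e := by
    simp only [hxvdef]
    rw [Finset.sum_boole]
    norm_cast
    congr 1
    ext e
    simp [Finset.mem_filter]
  -- the key identity
  have key : Z.betaZ μ P.E P.D p = G.betaP μ P Z.verts + (∑ e, g e) / 2 := by
    have hsplit : ∑ e, g e
        = (∑ e, ((sv e - zz e) + (tv e - ww e) + (2 * nn e - zz e - ww e)))
          - 2 * (∑ e, ev e * cv e) + (∑ e, ev e * (sv e + tv e)) - ∑ e, xv e := by
      rw [Finset.mul_sum, ← Finset.sum_sub_distrib, ← Finset.sum_add_distrib,
        ← Finset.sum_sub_distrib]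
      exact Finset.sum_congr rfl fun e _ => by simp only [hgdef]; ring
    have hmu : ∑ v ∈ Z.verts, (μ v + (G.valE P.E v : ℝ) / 2)
        = (∑ v ∈ Z.verts, μ v) + (∑ v ∈ Z.verts, (G.valE P.E v : ℝ)) / 2 := by
      rw [Finset.sum_add_distrib, Finset.sum_div]
    unfold Subcurve.betaZ Subcurve.degRes Multigraph.betaP
    push_cast
    rw [hsplit, hmu, hH1, hH2, hH3, hH4]
    ring
  -- nonnegativity of g
  have hgnn : ∀ e ∈ (Finset.univ : Finset G.E), 0 ≤ g e := by
    intro e _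
    by_cases hE : e ∈ P.E
    · have hev : ev e = 1 := by simp only [hevdef, if_pos hE]
      have hxv : xv e = 0 := by
        simp only [hxvdef]
        exact if_neg (fun h => h.2 hE)
      by_cases hcov : Z.covers e (p e)
      · have hcv : cv e = 1 := by simp only [hcvdef, if_pos hcov]
        have hn1 : 1 ≤ nn e := hcovnn e hcov
        simp only [hgdef, hev, hxv, hcv]
        linarith [hzsv e, hwtv e]
      · have hcv : cv e = 0 := by simp only [hcvdef, if_neg hcov]
        simp only [hgdef, hev, hxv, hcv]
        linarith [hzsv e, hwtv e, hznn e, hwnn e, hsv0 e, htv0 e]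
    · have hev : ev e = 0 := by simp only [hevdef, if_neg hE]
      by_cases hx : e ∈ G.crossEdges Z.verts Z.vertsᶜ
      · have hxv : xv e = 1 := by
          simp only [hxvdef]
          exact if_pos ⟨hx, hE⟩
        have hcr : (G.s e ∈ Z.verts ∧ G.t e ∉ Z.verts)
            ∨ (G.t e ∈ Z.verts ∧ G.s e ∉ Z.verts) := by
          have := hx
          simp only [Multigraph.crossEdges, Finset.mem_filter, Finset.mem_univ, true_and,
            Finset.mem_sdiff, Finset.mem_compl, not_not] at this
          tauto
        rcases hcr with ⟨hs, ht⟩ | ⟨ht, hs⟩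
        · have hsv : sv e = 1 := by simp only [hsvdef, if_pos hs]
          have htv : tv e = 0 := by simp only [htvdef, if_neg ht]
          simp only [hgdef, hev, hxv, hsv, htv]
          have h1 : ww e ≤ 0 := htv ▸ hwtv e
          linarith [hznn e, hww0 e]
        · have htv : tv e = 1 := by simp only [htvdef, if_pos ht]
          have hsv : sv e = 0 := by simp only [hsvdef, if_neg hs]
          simp only [hgdef, hev, hxv, hsv, htv]
          have h1 : zz e ≤ 0 := hsv ▸ hzsv e
          linarith [hwnn e, hzz0 e]
      · have hxv : xv e = 0 := by
          simp only [hxvdef]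
          exact if_neg (fun h => hx h.1)
        simp only [hgdef, hev, hxv]
        linarith [hzsv e, hwtv e, hznn e, hwnn e]
  have hsum_nonneg : 0 ≤ ∑ e, g e := Finset.sum_nonneg hgnn
  rw [key] at h0
  have hbP := (hP Z.verts).1
  have hbP0 : G.betaP μ P Z.verts = 0 := by linarith
  have hsum0 : ∑ e, g e = 0 := by linarith
  have hg0 : ∀ e, g e = 0 := fun e =>
    (Finset.sum_eq_zero_iff_of_nonneg hgnn).1 hsum0 e (Finset.mem_univ e)
  have hcross : G.crossEdges Z.verts Z.vertsᶜ ⊆ P.E := by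
    by_contra hns
    have := (hP Z.verts).2 hns
    linarith
  refine ⟨hcross, ?_⟩
  intro e he
  have hE : e ∈ P.E := hcross he
  have hev : ev e = 1 := by simp only [hevdef, if_pos hE]
  have hxv : xv e = 0 := by
    simp only [hxvdef]
    exact if_neg (fun h => h.2 hE)
  have hge := hg0 e
  simp only [hgdef] at hge
  rw [hev, hxv] at hge
  have hcr : (G.s e ∈ Z.verts ∧ G.t e ∉ Z.verts)
      ∨ (G.t e ∈ Z.verts ∧ G.s e ∉ Z.verts) := by
    have := he
    simp only [Multigraph.crossEdges, Finset.mem_filter, Finset.mem_univ, true_and,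
      Finset.mem_sdiff, Finset.mem_compl, not_not] at this
    tauto
  rcases hcr with ⟨hs, ht⟩ | ⟨ht, hs⟩
  · have hsv : sv e = 1 := by simp only [hsvdef, if_pos hs]
    have htv : tv e = 0 := by simp only [htvdef, if_neg ht]
    have hwprop : ¬ ∃ I ∈ Z.segs e, I.2 = ℓ e := by
      rintro ⟨I, hI, h1⟩
      exact ht (Z.closed_t e I hI h1)
    have hww : ww e = 0 := by simp only [hwwdef, if_neg hwprop]
    rw [hsv, htv, hww] at hge
    -- hge : 1 + 0 - 2*zz - 0 + 2*nn - 2*(1*cv) + 1*(1+0) - 0 = 0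
    have hcov : Z.covers e (p e) := by
      by_contra hcov
      have hcv : cv e = 0 := by simp only [hcvdef, if_neg hcov]
      rw [hcv] at hge
      linarith [hznn e, hzz1 e]
    have hcv : cv e = 1 := by simp only [hcvdef, if_pos hcov]
    rw [hcv] at hge
    have hn1 : 1 ≤ nn e := hcovnn e hcov
    have hzz1' : zz e = 1 := by linarith [hznn e, hzz1 e]
    have hnn1 : nn e = 1 := by linarith [hznn e]
    have hcard : (Z.segs e).card = 1 := by
      have := hnn1
      simp only [hnndef] at this
      exact_mod_cast this
    obtain ⟨I0, hI0⟩ := Finset.card_eq_one.1 hcard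
    have hzprop : ∃ I ∈ Z.segs e, I.1 = 0 := by
      by_contra h
      rw [hzzdef] at hzz1'
      simp only [if_neg h] at hzz1'
      norm_num at hzz1'
    obtain ⟨I, hI, hI1⟩ := hzprop
    have hIeq : I = I0 := Finset.mem_singleton.1 (hI0 ▸ hI)
    obtain ⟨J, hJ, hJ1, hJ2⟩ := hcov
    have hJeq : J = I0 := Finset.mem_singleton.1 (hI0 ▸ hJ)
    constructor
    · intro _ t ht0 htp
      refine ⟨I0, by rw [hI0]; exact Finset.mem_singleton_self I0, ?_, ?_⟩
      · rw [← hIeq, hI1]; exact ht0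
      · calc t ≤ p e := htp
          _ ≤ I0.2 := by rw [← hJeq]; exact hJ2
    · intro htV
      exact absurd htV ht
  · have htv : tv e = 1 := by simp only [htvdef, if_pos ht]
    have hsv : sv e = 0 := by simp only [hsvdef, if_neg hs]
    have hzprop' : ¬ ∃ I ∈ Z.segs e, I.1 = 0 := by
      rintro ⟨I, hI, h1⟩
      exact hs (Z.closed_s e I hI h1)
    have hzz : zz e = 0 := by simp only [hzzdef, if_neg hzprop']
    rw [hsv, htv, hzz] at hge
    have hcov : Z.covers e (p e) := by
      by_contra hcov
      have hcv : cv e = 0 := by simp only [hcvdef, if_neg hcov]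
      rw [hcv] at hge
      linarith [hwnn e, hww1 e]
    have hcv : cv e = 1 := by simp only [hcvdef, if_pos hcov]
    rw [hcv] at hge
    have hn1 : 1 ≤ nn e := hcovnn e hcov
    have hww1' : ww e = 1 := by linarith [hwnn e, hww1 e]
    have hnn1 : nn e = 1 := by linarith [hwnn e]
    have hcard : (Z.segs e).card = 1 := by
      have := hnn1
      simp only [hnndef] at this
      exact_mod_cast this
    obtain ⟨I0, hI0⟩ := Finset.card_eq_one.1 hcard
    have hwprop : ∃ I ∈ Z.segs e, I.2 = ℓ e := by
      by_contra h
      rw [hwwdef] at hww1'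
      simp only [if_neg h] at hww1'
      norm_num at hww1'
    obtain ⟨I, hI, hI2⟩ := hwprop
    have hIeq : I = I0 := Finset.mem_singleton.1 (hI0 ▸ hI)
    obtain ⟨J, hJ, hJ1, hJ2⟩ := hcov
    have hJeq : J = I0 := Finset.mem_singleton.1 (hI0 ▸ hJ)
    constructor
    · intro hsV
      exact absurd hsV hs
    · intro _ t htp htl
      refine ⟨I0, by rw [hI0]; exact Finset.mem_singleton_self I0, ?_, ?_⟩
      · calc I0.1 ≤ p e := by rw [← hJeq]; exact hJ1
          _ ≤ t := htp
      · rw [← hIeq] at *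
        rw [hI2]
        exact htl
end
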